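/- arXiv:2605.16741 — 8 statements merged into one kernel-verified Lean document; each statement's English description precedes it below -/
import Mathlib

section
/- For all integers k ≥ 2 and m ≥ 2, the sum over all strictly increasing sequences 1 < i_1 < i_2 < ... < i_k < m of integers of the product ∏_{j=1}^{k-1} (i_{j+1} - i_j) equals the binomial coefficient C(m+k-3, 2k-1). -/
open Finset

/-!
Write `S n k` for the sum of the gap products over the `k`-subsets of the `n`-point interval
`(a, a + n + 1)`, and `T n k` for the same sum after adjoining the left endpoint `a` to each
subset. Splitting on whether `a + 1` lies in the subset gives
`S (n+1) (k+1) = S n (k+1) + T n k` and `T (n+1) (k+1) = T n (k+1) + S n (k+1) + T n k`,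
the middle term because moving the adjoined point from `a + 1` down to `a` lengthens the first
gap by one. Pascal's rule then yields `S n (k+1) = C(n+k, 2k+1)` and `T n k = C(n+k, 2k)`.
-/

theorem Finset.sum_powersetCard_succ_insert {α β : Type*} [DecidableEq α] [AddCommMonoid β]
    {a : α} {s : Finset α} (ha : a ∉ s) (k : ℕ) (f : Finset α → β) :
    ∑ t ∈ (insert a s).powersetCard (k + 1), f t =
      ∑ t ∈ s.powersetCard (k + 1), f t + ∑ t ∈ s.powersetCard k, f (insert a t) := by
  rw [powersetCard_succ_insert ha, sum_union, sum_image]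
  · exact insert_erase_invOn.2.injOn.mono fun t ht ↦ notMem_mono (mem_powersetCard.1 ht).1 ha
  · aesop (add simp [disjoint_left, insert_subset_iff, mem_powersetCard])

def gapProd (s : Finset ℕ) : ℕ :=
  ∏ j ∈ range (#s - 1), ((s.sort (· ≤ ·)).getD (j + 1) 0 - (s.sort (· ≤ ·)).getD j 0)

theorem gapProd_insert_of_forall_lt {a : ℕ} {t : Finset ℕ} (ht : t.Nonempty)
    (h : ∀ b ∈ t, a < b) : gapProd (insert a t) = (t.min' ht - a) * gapProd t := by
  have ha : a ∉ t := fun ha ↦ lt_irrefl a (h a ha)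
  have hcard : #t = #t - 1 + 1 := (Nat.succ_pred_eq_of_pos ht.card_pos).symm
  rw [gapProd, gapProd, sort_insert _ (fun b hb ↦ (h b hb).le) ha, card_insert_of_notMem ha,
    Nat.add_sub_cancel, hcard, prod_range_succ', ← hcard, mul_comm, min'_eq_sorted_zero,
    ← List.getD_eq_getElem (d := 0)]
  rfl

theorem gapProd_insert_eq_insert_succ_add {a : ℕ} {t : Finset ℕ} (ht : t.Nonempty)
    (h : ∀ b ∈ t, a + 1 < b) :
    gapProd (insert a t) = gapProd (insert (a + 1) t) + gapProd t := by
  have hmin : a + 1 < t.min' ht := h _ (t.min'_mem ht)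
  rw [gapProd_insert_of_forall_lt ht fun b hb ↦ (h b hb).trans' (by omega),
    gapProd_insert_of_forall_lt ht h, show t.min' ht - a = t.min' ht - (a + 1) + 1 by omega,
    add_one_mul]

theorem gapProd_insert_insert_succ {a : ℕ} {t : Finset ℕ} (h : ∀ b ∈ t, a + 1 < b) :
    gapProd (insert a (insert (a + 1) t)) = gapProd (insert (a + 1) t) := by
  have hlt : ∀ b ∈ insert (a + 1) t, a < b :=
    forall_mem_insert .. |>.2 ⟨by omega, fun b hb ↦ (h b hb).trans' (by omega)⟩
  have hmin : (insert (a + 1) t).min' (insert_nonempty _ _) = a + 1 :=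
    le_antisymm (min'_le _ _ (mem_insert_self _ _)) (le_min' _ _ _ fun b hb ↦ hlt b hb)
  rw [gapProd_insert_of_forall_lt (insert_nonempty _ _) hlt, hmin, Nat.add_sub_cancel_left, one_mul]

theorem sum_gapProd_insert_powersetCard_zero (a : ℕ) (s : Finset ℕ) :
    ∑ t ∈ s.powersetCard 0, gapProd (insert a t) = 1 := by
  simp [gapProd]

theorem sum_gapProd_insert_powersetCard_succ {a : ℕ} {s : Finset ℕ} (h : ∀ b ∈ s, a + 1 < b)
    (k : ℕ) :
    ∑ t ∈ (insert (a + 1) s).powersetCard (k + 1), gapProd (insert a t) =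
      ∑ t ∈ s.powersetCard (k + 1), gapProd (insert (a + 1) t) +
        ∑ t ∈ s.powersetCard (k + 1), gapProd t +
        ∑ t ∈ s.powersetCard k, gapProd (insert (a + 1) t) := by
  have ha : a + 1 ∉ s := fun ha ↦ lt_irrefl _ (h _ ha)
  rw [sum_powersetCard_succ_insert ha, ← sum_add_distrib]
  congr 1
  · refine sum_congr rfl fun t ht ↦ ?_
    obtain ⟨hts, htk⟩ := mem_powersetCard.1 ht
    exact gapProd_insert_eq_insert_succ_add (card_pos.1 (by omega)) fun b hb ↦ h b (hts hb)
  · refine sum_congr rfl fun t ht ↦ ?_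
    exact gapProd_insert_insert_succ fun b hb ↦ h b ((mem_powersetCard.1 ht).1 hb)

theorem Ioo_eq_insert_add_one_Ioo {a b : ℕ} (h : a + 1 < b) :
    Ioo a b = insert (a + 1) (Ioo (a + 1) b) := by
  rw [Ioo_insert_left h, Ico_add_one_left_eq_Ioo]

theorem Nat.choose_add_two_add_two (n k : ℕ) :
    (n + 2).choose (k + 2) = (n + 1).choose (k + 2) + n.choose (k + 1) + n.choose k := by
  rw [Nat.choose_succ_succ' (n + 1), Nat.choose_succ_succ' n k]
  ring

theorem sum_gapProd_powersetCard_Ioo (n a k : ℕ) :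
    ∑ t ∈ (Ioo a (a + n + 1)).powersetCard (k + 1), gapProd t = (n + k).choose (2 * k + 1) ∧
      ∑ t ∈ (Ioo a (a + n + 1)).powersetCard k, gapProd (insert a t) =
        (n + k).choose (2 * k) := by
  induction n generalizing a k with
  | zero =>
    rw [show Ioo a (a + 0 + 1) = ∅ by ext; simp]
    cases k <;> simp [Nat.choose_eq_zero_of_lt, gapProd]
  | succ n ih =>
    have hI : Ioo a (a + (n + 1) + 1) = insert (a + 1) (Ioo (a + 1) (a + 1 + n + 1)) := by
      rw [Ioo_eq_insert_add_one_Ioo (by omega)]; ring_nf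
    have hlt : ∀ b ∈ Ioo (a + 1) (a + 1 + n + 1), a + 1 < b := fun b hb ↦ (mem_Ioo.1 hb).1
    rw [hI, sum_powersetCard_succ_insert (fun h ↦ lt_irrefl _ (hlt _ h))]
    refine ⟨?_, ?_⟩
    · rw [(ih _ _).1, (ih _ _).2, add_right_comm, Nat.choose_succ_succ', add_comm]
    · cases k with
      | zero => rw [sum_gapProd_insert_powersetCard_zero, Nat.mul_zero, Nat.choose_zero_right]
      | succ k =>
        rw [sum_gapProd_insert_powersetCard_succ hlt, (ih _ _).1, (ih _ _).2, (ih _ _).2,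
          show n + 1 + (k + 1) = n + k + 2 by ring, show n + (k + 1) = n + k + 1 by ring,
          show 2 * (k + 1) = 2 * k + 2 by ring, Nat.choose_add_two_add_two]

/-- For all integers `k ≥ 2` and `m ≥ 2`, the sum over all strictly
increasing sequences `1 < i₁ < i₂ < ⋯ < i_k < m` of `∏_{j=1}^{k-1} (i_{j+1} - i_j)`
equals `C(m+k-3, 2k-1)`.  The sum ranges over `k`-element subsets of `{2, …, m-1}`,
and the product is over consecutive differences in the sorted list. -/
theorem sum_prod_diff_open (k m : ℕ) (hk : 2 ≤ k) (hm : 2 ≤ m) :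
    ∑ s ∈ (Finset.Ioo 1 m).powersetCard k,
      ∏ j ∈ Finset.range (k - 1),
        ((s.sort (· ≤ ·)).getD (j + 1) 0 - (s.sort (· ≤ ·)).getD j 0) =
      Nat.choose (m + k - 3) (2 * k - 1) := by
  obtain ⟨k, rfl⟩ : ∃ j, k = j + 1 := ⟨k - 1, by omega⟩
  obtain ⟨n, rfl⟩ : ∃ n, m = 1 + n + 1 := ⟨m - 2, by omega⟩
  rw [show 1 + n + 1 + (k + 1) - 3 = n + k by omega, show 2 * (k + 1) - 1 = 2 * k + 1 by omega,
    ← (sum_gapProd_powersetCard_Ioo n 1 k).1]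
  refine sum_congr rfl fun s hs ↦ ?_
  rw [gapProd, (mem_powersetCard.1 hs).2]
end

section
/- Define Θ recursively on nonempty lists of positive integers with a parameter t: Θ([a₁]; t) = a₁, and for m ≥ 2, Θ([a₁,...,a_m]; t) = a_m · Θ([a₁,...,a_{m-1}]; t) + t · Θ([a₁,...,a_{m-2}, a_{m-1}+a_m]; t). Then Θ([a₁,...,a_m]; t) = Σ_{k=1}^{m} t^{m-k} · Σ_{1 ≤ i_1 < ... < i_k ≤ m} (∏_{j=1}^{k-1} (i_{j+1} - i_j)) · a_{i_1} ⋯ a_{i_k}. -/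
open Finset

/-- The spanning tree count `Θ` of generalized pencil graphs, defined by the
recurrence `Θ([a₁]; t) = a₁` and
`Θ([a₁,…,a_m]; t) = a_m · Θ([a₁,…,a_{m-1}]; t) + t · Θ([a₁,…,a_{m-2}, a_{m-1}+a_m]; t)`.
The list argument stores the parameters in reverse order: `[a_m, a_{m-1}, …, a₁]`. -/
def theta : List ℕ → ℕ → ℕ
  | [], _ => 1
  | [a], _ => a
  | a :: b :: l, t => a * theta (b :: l) t + t * theta ((b + a) :: l) t
  termination_by l _ => l.length

/-!
Let `Q m = ∑_{S ⊆ [1, m]} t ^ (m - |S|) w(S) a^S`, where `w(S)` is the product of the gaps between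
consecutive elements of `S`, and let `H m` be the same sum with `w(S ∪ {m + 1})` in place of `w(S)`.
Splitting off the element `m + 1` gives `Q (m + 1) = t Q m + a_{m+1} H m`. Putting `m + 2` on top
of `S` multiplies the weight by `m + 2 - max S = (m + 1 - max S) + 1`, which gives
`H (m + 1) = t H m + Q (m + 1)`. Since `Q m` is linear in `a_m`, these two recurrences are exactly
what is needed to check that `Q` satisfies the defining recurrence of `Θ`.
-/

def gapProduct (L : List ℕ) : ℕ :=
  ∏ j ∈ range (L.length - 1), (L.getD (j + 1) 0 - L.getD j 0)

theorem gapProduct_append_singleton {L : List ℕ} (hL : L ≠ []) (n : ℕ) :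
    gapProduct (L ++ [n]) = (n - L.getLast hL) * gapProduct L := by
  obtain ⟨k, hk⟩ : ∃ k, L.length = k + 1 := Nat.exists_eq_add_one.2 (List.length_pos_iff.2 hL)
  have hprefix : ∀ j ≤ k, (L ++ [n]).getD j 0 = L.getD j 0 :=
    fun j hj => List.getD_append _ _ _ _ (by omega)
  have hlast : (L ++ [n]).getD (k + 1) 0 = n := by
    rw [List.getD_append_right _ _ _ _ (by omega), hk, Nat.sub_self]; rfl
  have hgetLast : L.getLast hL = L.getD k 0 := by
    rw [List.getLast_eq_getElem, List.getD_eq_getElem _ _ (by omega)]; simp [hk]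
  rw [gapProduct, gapProduct, List.length_append, hk, List.length_singleton, Nat.add_sub_cancel,
    Nat.add_sub_cancel, prod_range_succ, hlast, hprefix k le_rfl, hgetLast, mul_comm]
  congr 1
  refine prod_congr rfl fun j hj => ?_
  rw [mem_range] at hj
  rw [hprefix j hj.le, hprefix (j + 1) hj]

theorem Finset.sort_insert_of_forall_lt {α : Type*} [LinearOrder α] {s : Finset α} {n : α}
    (h : ∀ x ∈ s, x < n) : (insert n s).sort (· ≤ ·) = s.sort (· ≤ ·) ++ [n] := by
  have hnodup : (s.sort (· ≤ ·) ++ [n]).Nodup :=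
    List.nodup_append.2 ⟨sort_nodup _ _, List.nodup_singleton n,
      fun x hx y hy => ((h x ((mem_sort _).1 hx)).trans_eq (List.mem_singleton.1 hy).symm).ne⟩
  have hsorted : (s.sort (· ≤ ·) ++ [n]).Pairwise (· ≤ ·) :=
    List.pairwise_append.2 ⟨pairwise_sort _ _, List.pairwise_singleton _ n,
      fun x hx y hy => (h x ((mem_sort _).1 hx)).le.trans_eq (List.mem_singleton.1 hy).symm⟩
  conv_rhs => rw [← (List.toFinset_sort _ hnodup).2 hsorted]
  ext x
  simp

theorem Finset.sort_ne_nil {α : Type*} [LinearOrder α] {s : Finset α} (hs : s.Nonempty) :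
    s.sort (· ≤ ·) ≠ [] :=
  List.ne_nil_of_length_pos (by simpa using hs.card_pos)

theorem Finset.getLast_sort_eq_max' {α : Type*} [LinearOrder α] {s : Finset α} (hs : s.Nonempty) :
    (s.sort (· ≤ ·)).getLast (sort_ne_nil hs) = s.max' hs := by
  rw [List.getLast_eq_getElem, max'_eq_sorted_last]

/-- Setting `gapWeight ∅ = 0` rather than the empty product removes the empty subset from the
sums below and makes `gapWeight_insert_add_two` hold for `s = ∅` too. -/
def gapWeight (s : Finset ℕ) : ℕ :=
  if s.Nonempty then gapProduct (s.sort (· ≤ ·)) else 0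

@[simp]
theorem gapWeight_empty : gapWeight ∅ = 0 := rfl

@[simp]
theorem gapWeight_singleton (n : ℕ) : gapWeight {n} = 1 := by
  simp [gapWeight, gapProduct]

theorem gapWeight_of_nonempty {s : Finset ℕ} (hs : s.Nonempty) :
    gapWeight s = ∏ j ∈ range (s.card - 1),
      ((s.sort (· ≤ ·)).getD (j + 1) 0 - (s.sort (· ≤ ·)).getD j 0) := by
  rw [gapWeight, if_pos hs, gapProduct, length_sort]

theorem gapWeight_insert_of_forall_lt {s : Finset ℕ} (hs : s.Nonempty) {n : ℕ}
    (h : ∀ x ∈ s, x < n) : gapWeight (insert n s) = (n - s.max' hs) * gapWeight s := by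
  rw [gapWeight, if_pos (insert_nonempty n s), sort_insert_of_forall_lt h,
    gapProduct_append_singleton (sort_ne_nil hs), getLast_sort_eq_max' hs, gapWeight, if_pos hs]

theorem gapWeight_insert_succ_insert {s : Finset ℕ} {n : ℕ} (h : ∀ x ∈ s, x < n) :
    gapWeight (insert (n + 1) (insert n s)) = gapWeight (insert n s) := by
  have h' : ∀ x ∈ insert n s, x < n + 1 := by
    simpa [Nat.lt_succ_iff] using fun x hx => (h x hx).le
  have hmax : (insert n s).max' (insert_nonempty n s) = n :=
    le_antisymm (max'_le _ _ _ fun x hx => Nat.lt_succ_iff.1 (h' x hx))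
      (le_max' _ _ (mem_insert_self n s))
  rw [gapWeight_insert_of_forall_lt (insert_nonempty n s) h', hmax, Nat.add_sub_cancel_left,
    one_mul]

theorem gapWeight_insert_add_two {s : Finset ℕ} {n : ℕ} (h : ∀ x ∈ s, x ≤ n) :
    gapWeight (insert (n + 2) s) = gapWeight (insert (n + 1) s) + gapWeight s := by
  rcases s.eq_empty_or_nonempty with rfl | hs
  · simp
  have hmax : s.max' hs ≤ n := max'_le _ _ _ h
  rw [gapWeight_insert_of_forall_lt hs fun x hx => by have := h x hx; omega,
    gapWeight_insert_of_forall_lt hs fun x hx => by have := h x hx; omega,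
    show n + 2 - s.max' hs = (n + 1 - s.max' hs) + 1 by omega, add_one_mul]

section WeightedSubsetSum

variable (w : Finset ℕ → ℕ) (a : ℕ → ℕ) (t : ℕ)

def weightedSubsetSum (m : ℕ) : ℕ :=
  ∑ s ∈ (Icc 1 m).powerset, t ^ (m - s.card) * w s * ∏ i ∈ s, a i

theorem weightedSubsetSum_succ (m : ℕ) :
    weightedSubsetSum w a t (m + 1) =
      t * weightedSubsetSum w a t m +
        a (m + 1) * weightedSubsetSum (fun s => w (insert (m + 1) s)) a t m := by
  have hm : m + 1 ∉ Icc 1 m := by simp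
  rw [weightedSubsetSum, ← insert_Icc_right_eq_Icc_add_one (by omega), sum_powerset_insert hm,
    weightedSubsetSum, weightedSubsetSum, mul_sum, mul_sum]
  congr 1 <;> refine sum_congr rfl fun s hs => ?_
  all_goals
    have hsub := mem_powerset.1 hs
    have hcard : s.card ≤ m := by simpa using card_le_card hsub
  · rw [show m + 1 - s.card = m - s.card + 1 by omega, pow_succ]
    ring
  · have hns : m + 1 ∉ s := fun h => hm (hsub h)
    rw [card_insert_of_notMem hns, prod_insert hns, Nat.add_sub_add_right]
    ring

variable {w a t}

theorem weightedSubsetSum_congr {v : Finset ℕ → ℕ} {b : ℕ → ℕ} {m : ℕ}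
    (hw : ∀ s ⊆ Icc 1 m, w s = v s) (ha : ∀ i ∈ Icc 1 m, a i = b i) :
    weightedSubsetSum w a t m = weightedSubsetSum v b t m :=
  sum_congr rfl fun s hs => by
    rw [hw s (mem_powerset.1 hs), prod_congr rfl fun i hi => ha i (mem_powerset.1 hs hi)]

theorem weightedSubsetSum_of_eq_add {u v : Finset ℕ → ℕ} {m : ℕ}
    (hw : ∀ s ⊆ Icc 1 m, w s = u s + v s) :
    weightedSubsetSum w a t m = weightedSubsetSum u a t m + weightedSubsetSum v a t m := by
  rw [weightedSubsetSum, weightedSubsetSum, weightedSubsetSum, ← sum_add_distrib]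
  exact sum_congr rfl fun s hs => by rw [hw s (mem_powerset.1 hs)]; ring

end WeightedSubsetSum

theorem weightedSubsetSum_gapWeight_insert_add_two (a : ℕ → ℕ) (t m : ℕ) :
    weightedSubsetSum (fun s => gapWeight (insert (m + 2) s)) a t (m + 1) =
      t * weightedSubsetSum (fun s => gapWeight (insert (m + 1) s)) a t m +
        weightedSubsetSum gapWeight a t (m + 1) := by
  have hbound : ∀ s ⊆ Icc 1 m, ∀ x ∈ s, x ≤ m := fun s hs x hx => (mem_Icc.1 (hs hx)).2
  rw [weightedSubsetSum_succ, weightedSubsetSum_succ,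
    weightedSubsetSum_of_eq_add fun s hs => gapWeight_insert_add_two (hbound s hs),
    weightedSubsetSum_congr (fun s hs => gapWeight_insert_succ_insert
      fun x hx => Nat.lt_succ_of_le (hbound s hs x hx)) fun _ _ => rfl]
  ring

def pencilList (a : ℕ → ℕ) (m : ℕ) : List ℕ := (List.range m).map fun j => a (m - j)

theorem pencilList_succ (a : ℕ → ℕ) (m : ℕ) :
    pencilList a (m + 1) = a (m + 1) :: pencilList a m := by
  simp [pencilList, List.range_succ_eq_map, Function.comp_def]

theorem pencilList_congr {a b : ℕ → ℕ} {m : ℕ} (h : ∀ i ∈ Icc 1 m, a i = b i) :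
    pencilList a m = pencilList b m :=
  List.map_congr_left fun j hj => h _ (by simp at hj ⊢; omega)

theorem theta_pencilList_add_two (a : ℕ → ℕ) (t m : ℕ) :
    theta (pencilList a (m + 2)) t =
      a (m + 2) * theta (pencilList a (m + 1)) t +
        t * theta (pencilList (Function.update a (m + 1) (a (m + 1) + a (m + 2))) (m + 1)) t := by
  have hagree : pencilList (Function.update a (m + 1) (a (m + 1) + a (m + 2))) m = pencilList a m :=
    pencilList_congr fun i hi => Function.update_of_ne (by simp at hi; omega) _ _
  rw [pencilList_succ, pencilList_succ, theta, pencilList_succ, Function.update_self, hagree]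

theorem theta_pencilList_eq_weightedSubsetSum (a : ℕ → ℕ) (t m : ℕ) :
    theta (pencilList a (m + 1)) t = weightedSubsetSum gapWeight a t (m + 1) := by
  induction m generalizing a with
  | zero =>
    rw [weightedSubsetSum_succ]
    simp [pencilList, theta, weightedSubsetSum]
  | succ m ih =>
    set a' := Function.update a (m + 1) (a (m + 1) + a (m + 2))
    have hagree : ∀ i ∈ Icc 1 m, a' i = a i :=
      fun i hi => Function.update_of_ne (by simp at hi; omega) _ _
    have hsplit : weightedSubsetSum gapWeight a' t (m + 1) =
        t * weightedSubsetSum gapWeight a t m +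
          (a (m + 1) + a (m + 2)) *
            weightedSubsetSum (fun s => gapWeight (insert (m + 1) s)) a t m := by
      rw [weightedSubsetSum_succ, show a' (m + 1) = _ from Function.update_self ..,
        weightedSubsetSum_congr (fun _ _ => rfl) hagree,
        weightedSubsetSum_congr (fun _ _ => rfl) hagree]
    rw [theta_pencilList_add_two, ih, ih, hsplit, weightedSubsetSum_succ _ _ _ (m + 1),
      weightedSubsetSum_gapWeight_insert_add_two, weightedSubsetSum_succ _ _ _ m]
    ring

theorem weightedSubsetSum_gapWeight_eq (a : ℕ → ℕ) (t m : ℕ) :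
    weightedSubsetSum gapWeight a t m =
      ∑ k ∈ Icc 1 m, t ^ (m - k) *
        ∑ s ∈ (Icc 1 m).powersetCard k,
          (∏ j ∈ range (k - 1), ((s.sort (· ≤ ·)).getD (j + 1) 0 - (s.sort (· ≤ ·)).getD j 0)) *
          ∏ i ∈ s, a i := by
  have hzero :
      ∑ s ∈ (Icc 1 m).powersetCard 0, t ^ (m - s.card) * gapWeight s * ∏ i ∈ s, a i = 0 := by
    simp
  rw [weightedSubsetSum, sum_powerset, Nat.card_Icc, Nat.add_sub_cancel,
    ← sum_subset (s₁ := Icc 1 m) (fun k hk => by simp at hk ⊢; omega)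
      fun k hk hk' => by rw [show k = 0 by simp at hk hk'; omega, hzero]]
  refine sum_congr rfl fun k hk => ?_
  rw [mul_sum]
  refine sum_congr rfl fun s hs => ?_
  have hcard : s.card = k := (mem_powersetCard.1 hs).2
  rw [gapWeight_of_nonempty (card_pos.1 (by simp at hk; omega)), hcard]
  ring

/-- The recursively defined `Θ` has the closed form
`Θ([a₁,…,a_m]; t) = Σ_{k=1}^{m} t^{m-k} Σ_{1 ≤ i₁ < ⋯ < i_k ≤ m}
(∏_{j=1}^{k-1} (i_{j+1} - i_j)) · a_{i₁} ⋯ a_{i_k}`. -/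
theorem theta_closed_form (m t : ℕ) (hm : 1 ≤ m) (a : ℕ → ℕ) :
    theta ((List.range m).map fun j => a (m - j)) t =
      ∑ k ∈ Finset.Icc 1 m, t ^ (m - k) *
        ∑ s ∈ (Finset.Icc 1 m).powersetCard k,
          (∏ j ∈ Finset.range (k - 1),
            ((s.sort (· ≤ ·)).getD (j + 1) 0 - (s.sort (· ≤ ·)).getD j 0)) *
          ∏ i ∈ s, a i := by
  obtain ⟨n, rfl⟩ := Nat.exists_eq_add_of_le' hm
  rw [← weightedSubsetSum_gapWeight_eq]
  exact theta_pencilList_eq_weightedSubsetSum a t n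
end

section
/- For every m ≥ 0, the number G(m) defined by the generating function Σ_{m≥0} G(m) x^m = (1-2x)/(1-8x+4x²) satisfies G(m) = Σ_{k=0}^{m} C(2m+1, 2k) · 3^{m-k}. -/
/-!
`G(m)` is the `√3`-coordinate of `(1 + √3)^(2m+1)` in `ℤ[√3]`: both satisfy the recurrence because
`(1 + √3)² = 4 + 2√3` has trace `8` and norm `4`. By the binomial theorem, that coordinate collects
the terms `C(2m+1, 2k) · √3^(2m+1-2k) = C(2m+1, 2k) · 3^(m-k) · √3`.
-/

open Finset

/-- `G(m)`: `G(0) = 1`, `G(1) = 6`, `G(m) = 8·G(m-1) - 4·G(m-2)`, the coefficient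
sequence of `(1-2x)/(1-8x+4x²)`. -/
def Gseq : ℕ → ℤ
  | 0 => 1
  | 1 => 6
  | (m + 2) => 8 * Gseq (m + 1) - 4 * Gseq m

theorem Finset.sum_range_two_mul {M : Type*} [AddCommMonoid M] (f : ℕ → M) (n : ℕ) :
    ∑ j ∈ range (2 * n), f j = ∑ k ∈ range n, f (2 * k) + ∑ k ∈ range n, f (2 * k + 1) := by
  induction n with
  | zero => simp
  | succ n ih =>
    rw [Nat.mul_succ, sum_range_succ, sum_range_succ, ih, sum_range_succ, sum_range_succ]
    abel

namespace Zsqrtd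

variable {d : ℤ}

theorem im_sum {ι : Type*} (s : Finset ι) (f : ι → ℤ√d) :
    (∑ i ∈ s, f i).im = ∑ i ∈ s, (f i).im :=
  map_sum (AddMonoidHom.mk' im im_add) f s

theorem sqrtd_pow_two_mul (n : ℕ) : (sqrtd : ℤ√d) ^ (2 * n) = (d : ℤ√d) ^ n := by
  rw [pow_mul, sq, dmuld]

theorem im_one_add_sqrtd_pow_odd (m : ℕ) :
    ((1 + sqrtd : ℤ√d) ^ (2 * m + 1)).im =
      ∑ k ∈ range (m + 1), ((2 * m + 1).choose (2 * k) : ℤ) * d ^ (m - k) := by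
  rw [add_pow, show 2 * m + 1 + 1 = 2 * (m + 1) by ring, sum_range_two_mul, im_add, im_sum,
    im_sum]
  simp only [one_pow, one_mul]
  convert add_zero (∑ k ∈ range (m + 1), ((2 * m + 1).choose (2 * k) : ℤ) * d ^ (m - k)) using 2
  · refine sum_congr rfl fun k hk => ?_
    rw [show 2 * m + 1 - 2 * k = 2 * (m - k) + 1 by grind, pow_succ, sqrtd_pow_two_mul,
      ← Int.cast_pow, ← Int.cast_natCast]
    simp only [im_mul, re_mul, im_intCast, re_intCast, im_sqrtd, re_sqrtd]
    ring
  · refine sum_eq_zero fun k hk => ?_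
    rw [show 2 * m + 1 - (2 * k + 1) = 2 * (m - k) by grind, sqrtd_pow_two_mul,
      ← Int.cast_pow, ← Int.cast_natCast, ← Int.cast_mul, im_intCast]

/-- `(1 + √d)²` has trace `2(1 + d)` and norm `(1 - d)²`. -/
theorem one_add_sqrtd_pow_add_four (n : ℕ) :
    (1 + sqrtd : ℤ√d) ^ (n + 4) =
      2 * (1 + (d : ℤ√d)) * (1 + sqrtd) ^ (n + 2) - (1 - (d : ℤ√d)) ^ 2 * (1 + sqrtd) ^ n := by
  have h : (1 + sqrtd : ℤ√d) ^ 4 =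
      2 * (1 + (d : ℤ√d)) * (1 + sqrtd) ^ 2 - (1 - (d : ℤ√d)) ^ 2 := by
    linear_combination (4 + 4 * sqrtd + sqrtd * sqrtd - d) * dmuld (d := d)
  rw [pow_add, h, pow_add]
  ring

end Zsqrtd

open Zsqrtd in
theorem Gseq_eq_im_one_add_sqrtd_pow :
    ∀ m : ℕ, Gseq m = ((1 + sqrtd : ℤ√3) ^ (2 * m + 1)).im
  | 0 => by decide
  | 1 => by decide
  | m + 2 => by
    have h := one_add_sqrtd_pow_add_four (d := 3) (2 * m + 1)
    rw [show 2 * m + 1 + 4 = 2 * (m + 2) + 1 by ring,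
      show 2 * m + 1 + 2 = 2 * (m + 1) + 1 by ring] at h
    rw [Gseq, h, Gseq_eq_im_one_add_sqrtd_pow m, Gseq_eq_im_one_add_sqrtd_pow (m + 1)]
    simp only [im_sub, im_mul, re_mul, im_add, re_add]
    norm_num

/-- For every `m ≥ 0`, `G(m) = Σ_{k=0}^{m} C(2m+1, 2k) · 3^{m-k}`. -/
theorem Gseq_eq_binomial_sum (m : ℕ) :
    Gseq m = ∑ k ∈ Finset.range (m + 1),
      ((2 * m + 1).choose (2 * k) : ℤ) * 3 ^ (m - k) := by
  rw [Gseq_eq_im_one_add_sqrtd_pow, Zsqrtd.im_one_add_sqrtd_pow_odd]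
end

section
/- Let σ and α be permutations of {1, ..., n} and let (i, j, k) be a 3-cycle of α with i, j, k distinct. Let α' = α·(i,k,j), so that α' agrees with α except that i, j, k are fixed points of α'. Then κ(σ, α') ≤ κ(σ, α) + 2, where κ(σ, β) denotes the number of orbits of the subgroup generated by σ and β acting on {1, ..., n}. -/
open MulAction


/-- `κ(σ, β)`: the number of orbits of the subgroup generated by `σ` and `β`
acting on `{1, …, n}`. -/
noncomputable def kappa {n : ℕ} (σ β : Equiv.Perm (Fin n)) : ℕ :=
  Nat.card (MulAction.orbitRel.Quotient
    (Subgroup.closure ({σ, β} : Set (Equiv.Perm (Fin n)))) (Fin n))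

/-- Let `(i,j,k)` be a 3-cycle of `α` and let `α'` agree with `α`
except that `i`, `j`, `k` are fixed points of `α'` (i.e. `α' = α·(i,k,j)`).
Then `κ(σ, α') ≤ κ(σ, α) + 2`. -/
theorem kappa_le_of_remove_three_cycle {n : ℕ} (σ α α' : Equiv.Perm (Fin n))
    (i j k : Fin n) (hij : i ≠ j) (hik : i ≠ k) (hjk : j ≠ k)
    (hcyc : α i = j ∧ α j = k ∧ α k = i)
    (hα' : α' i = i ∧ α' j = j ∧ α' k = k ∧
      ∀ x, x ≠ i → x ≠ j → x ≠ k → α' x = α x) :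
    kappa σ α' ≤ kappa σ α + 2 := by
  classical
  obtain ⟨hci, hcj, hck⟩ := hcyc
  obtain ⟨hi, hj, hk, hrest⟩ := hα'
  set G := Subgroup.closure ({σ, α} : Set (Equiv.Perm (Fin n))) with hG
  set G' := Subgroup.closure ({σ, α'} : Set (Equiv.Perm (Fin n))) with hG'
  have hσG : σ ∈ G := Subgroup.subset_closure (by simp)
  have hαG : α ∈ G := Subgroup.subset_closure (by simp)
  have hσG' : σ ∈ G' := Subgroup.subset_closure (by simp)
  have hα'G' : α' ∈ G' := Subgroup.subset_closure (by simp)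
  let r : Fin n → Fin n → Prop := fun x y => x ∈ orbit G y
  let r' : Fin n → Fin n → Prop := fun x y => x ∈ orbit G' y
  have hr'refl : ∀ x, r' x x := fun x => mem_orbit_self x
  have hr'symm : ∀ {x y}, r' x y → r' y x := fun h => (orbitRel G' (Fin n)).symm h
  have hr'trans : ∀ {x y z}, r' x y → r' y z → r' x z :=
    fun h1 h2 => (orbitRel G' (Fin n)).trans h1 h2
  have hrsymm : ∀ {x y}, r x y → r y x := fun h => (orbitRel G (Fin n)).symm h
  have hrtrans : ∀ {x y z}, r x y → r y z → r x z :=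
    fun h1 h2 => (orbitRel G (Fin n)).trans h1 h2
  -- G'-orbits refine G-orbits
  have key1 : ∀ g ∈ G', ∀ y : Fin n, g y ∈ orbit G y := by
    intro g hg
    refine Subgroup.closure_induction
      (p := fun g _ => ∀ y : Fin n, g y ∈ orbit G y) ?_ ?_ ?_ ?_ hg
    · intro x hx y
      rcases hx with hx | hx
      · rw [hx]; exact ⟨⟨σ, hσG⟩, rfl⟩
      · simp only [Set.mem_singleton_iff] at hx; rw [hx]
        by_cases hyi : y = i
        · rw [hyi, hi]; exact mem_orbit_self _
        by_cases hyj : y = j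
        · rw [hyj, hj]; exact mem_orbit_self _
        by_cases hyk : y = k
        · rw [hyk, hk]; exact mem_orbit_self _
        · rw [hrest y hyi hyj hyk]; exact ⟨⟨α, hαG⟩, rfl⟩
    · intro y; exact mem_orbit_self y
    · intro g h _ _ ihg ihh y
      exact hrtrans (ihg (h y)) (ihh y)
    · intro g _ ih y
      have := ih (g⁻¹ y)
      have h2 : g (g⁻¹ y) = y := by simp
      rw [h2] at this
      exact hrsymm this
  have hsub : ∀ {x y}, r' x y → r x y := by
    intro x y hxy
    obtain ⟨⟨g, hg⟩, hgx⟩ := hxy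
    have := key1 g hg y
    rwa [show g y = x from hgx] at this
  -- the auxiliary relation S
  let T : Fin n → Prop := fun x => r' x i ∨ r' x j ∨ r' x k
  let S : Fin n → Fin n → Prop := fun x y => r' x y ∨ (T x ∧ T y)
  have hTinv : ∀ {x y}, r' x y → T y → T x := by
    intro x y hxy hty
    rcases hty with h | h | h
    · exact Or.inl (hr'trans hxy h)
    · exact Or.inr (Or.inl (hr'trans hxy h))
    · exact Or.inr (Or.inr (hr'trans hxy h))
  have hSsymm : ∀ {x y}, S x y → S y x := by
    rintro x y (h | ⟨h1, h2⟩)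
    · exact Or.inl (hr'symm h)
    · exact Or.inr ⟨h2, h1⟩
  have hStrans : ∀ {x y z}, S x y → S y z → S x z := by
    rintro x y z (h1 | ⟨h1, h1'⟩) (h2 | ⟨h2, h2'⟩)
    · exact Or.inl (hr'trans h1 h2)
    · exact Or.inr ⟨hTinv h1 h2, h2'⟩
    · exact Or.inr ⟨h1, hTinv (hr'symm h2) h1'⟩
    · exact Or.inr ⟨h1, h2'⟩
  -- G-orbit relation is contained in S
  have key2 : ∀ g ∈ G, ∀ y : Fin n, S y (g y) := by
    intro g hg
    refine Subgroup.closure_induction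
      (p := fun g _ => ∀ y : Fin n, S y (g y)) ?_ ?_ ?_ ?_ hg
    · intro x hx y
      rcases hx with hx | hx
      · rw [hx]; exact Or.inl (hr'symm ⟨⟨σ, hσG'⟩, rfl⟩)
      · simp only [Set.mem_singleton_iff] at hx; rw [hx]
        by_cases hyi : y = i
        · rw [hyi, hci]
          exact Or.inr ⟨Or.inl (hr'refl i), Or.inr (Or.inl (hr'refl j))⟩
        by_cases hyj : y = j
        · rw [hyj, hcj]
          exact Or.inr ⟨Or.inr (Or.inl (hr'refl j)), Or.inr (Or.inr (hr'refl k))⟩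
        by_cases hyk : y = k
        · rw [hyk, hck]
          exact Or.inr ⟨Or.inr (Or.inr (hr'refl k)), Or.inl (hr'refl i)⟩
        · rw [← hrest y hyi hyj hyk]
          exact Or.inl (hr'symm ⟨⟨α', hα'G'⟩, rfl⟩)
    · intro y; exact Or.inl (hr'refl y)
    · intro g h _ _ ihg ihh y
      exact hStrans (ihh y) (ihg (h y))
    · intro g _ ih y
      have := ih (g⁻¹ y)
      have h2 : g (g⁻¹ y) = y := by simp
      rw [h2] at this
      exact hSsymm this
  have hS_of_r : ∀ {x y}, r x y → S x y := by
    intro x y hxy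
    obtain ⟨⟨g, hg⟩, hgx⟩ := hxy
    have := key2 g hg y
    rw [show g y = x from hgx] at this
    exact hSsymm this
  -- build the injection
  let fc : Fin n → (orbitRel.Quotient G (Fin n)) ⊕ Fin 2 := fun x =>
    if r' x j then Sum.inr 0 else if r' x k then Sum.inr 1
    else Sum.inl (Quotient.mk (orbitRel G (Fin n)) x)
  have hfc : ∀ x y : Fin n, fc x = fc y → r' x y := by
    intro x y hfab
    simp only [fc] at hfab
    by_cases hxj : r' x j
    · rw [if_pos hxj] at hfab
      by_cases hyj : r' y j
      · exact hr'trans hxj (hr'symm hyj)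
      rw [if_neg hyj] at hfab
      by_cases hyk : r' y k
      · rw [if_pos hyk] at hfab
        exact absurd (Sum.inr.inj hfab) (by decide)
      · rw [if_neg hyk] at hfab; simp at hfab
    rw [if_neg hxj] at hfab
    by_cases hxk : r' x k
    · rw [if_pos hxk] at hfab
      by_cases hyj : r' y j
      · rw [if_pos hyj] at hfab
        exact absurd (Sum.inr.inj hfab) (by decide)
      rw [if_neg hyj] at hfab
      by_cases hyk : r' y k
      · exact hr'trans hxk (hr'symm hyk)
      · rw [if_neg hyk] at hfab; simp at hfab
    rw [if_neg hxk] at hfab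
    by_cases hyj : r' y j
    · rw [if_pos hyj] at hfab; simp at hfab
    rw [if_neg hyj] at hfab
    by_cases hyk : r' y k
    · rw [if_pos hyk] at hfab; simp at hfab
    rw [if_neg hyk] at hfab
    have hxy : r x y := Quotient.exact (Sum.inl.inj hfab)
    rcases hS_of_r hxy with h | ⟨hx, hy⟩
    · exact h
    · have hxi : r' x i := by
        rcases hx with h | h | h
        · exact h
        · exact absurd h hxj
        · exact absurd h hxk
      have hyi : r' y i := by
        rcases hy with h | h | h
        · exact h
        · exact absurd h hyj
        · exact absurd h hyk
      exact hr'trans hxi (hr'symm hyi)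
  have hfcwd : ∀ x y : Fin n, r' x y → fc x = fc y := by
    intro x y hxy
    simp only [fc]
    by_cases hxj : r' x j
    · rw [if_pos hxj, if_pos (hr'trans (hr'symm hxy) hxj)]
    rw [if_neg hxj, if_neg (fun h => hxj (hr'trans hxy h))]
    by_cases hxk : r' x k
    · rw [if_pos hxk, if_pos (hr'trans (hr'symm hxy) hxk)]
    rw [if_neg hxk, if_neg (fun h => hxk (hr'trans hxy h))]
    exact congrArg Sum.inl (Quotient.sound (hsub hxy))
  let f : orbitRel.Quotient G' (Fin n) → (orbitRel.Quotient G (Fin n)) ⊕ Fin 2 :=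
    Quotient.lift fc (fun x y hxy => hfcwd x y hxy)
  have hfinj : Function.Injective f := by
    intro a b
    refine Quotient.inductionOn₂ a b ?_
    intro x y hfab
    exact Quotient.sound (hfc x y hfab)
  have hle : Nat.card (orbitRel.Quotient G' (Fin n)) ≤
      Nat.card ((orbitRel.Quotient G (Fin n)) ⊕ Fin 2) :=
    Nat.card_le_card_of_injective f hfinj
  rw [Nat.card_sum] at hle
  simpa [kappa, hG, hG', Nat.card_eq_fintype_card] using hle
end

section
/- Let σ and α be permutations of {1, ..., n}, and suppose i, j, k are distinct points forming a 3-cycle (i,j,k) of α, all lying in the same orbit of σ (a 'double loop'). Then replacing (i,j,k) by fixed points does not change the number of orbits of the generated group: κ(σ, α·(i,k,j)) = κ(σ, α). -/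
open MulAction Subgroup

theorem MulAction.orbitRel_closure_le {G α : Type*} [Group G] [MulAction G α] {S : Set G}
    {H : Subgroup G} (hS : ∀ s ∈ S, ∀ x : α, s • x ∈ orbit H x) :
    orbitRel (closure S) α ≤ orbitRel H α := by
  suffices h : ∀ g ∈ closure S, ∀ x : α, g • x ∈ orbit H x by
    rintro _ x ⟨⟨g, hg⟩, rfl⟩
    exact h g hg x
  intro g hg
  induction hg using closure_induction with
  | mem s hs => exact hS s hs
  | one => simp [mem_orbit_self]
  | mul a b _ _ ha hb => intro x; rw [mul_smul, ← orbit_eq_iff.mpr (hb x)]; exact ha (b • x)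
  | inv a _ ha => intro x; exact mem_orbit_symm.mp (by simpa using ha (a⁻¹ • x))

theorem Equiv.Perm.apply_mem_orbit_of_mem {α : Type*} {H : Subgroup (Equiv.Perm α)}
    {g : Equiv.Perm α} (hg : g ∈ H) (x : α) : g x ∈ orbit H x :=
  mem_orbit x (⟨g, hg⟩ : H)

theorem Equiv.Perm.SameCycle.mem_orbit_of_mem {α : Type*} {σ : Equiv.Perm α} {x y : α}
    (h : σ.SameCycle x y) {H : Subgroup (Equiv.Perm α)} (hσ : σ ∈ H) : y ∈ orbit H x := by
  obtain ⟨m, hm⟩ := h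
  exact hm ▸ Equiv.Perm.apply_mem_orbit_of_mem (zpow_mem hσ m) x

theorem kappa_eq_of_orbitRel_eq {n : ℕ} {σ β σ' β' : Equiv.Perm (Fin n)}
    (h : orbitRel (closure {σ, β}) (Fin n) = orbitRel (closure {σ', β'}) (Fin n)) :
    kappa σ β = kappa σ' β' := by
  unfold kappa orbitRel.Quotient
  rw [h]

theorem kappa_eq_of_double_loop_general {n : ℕ} (σ α α' : Equiv.Perm (Fin n))
    (i j k : Fin n)
    (hcyc : α i = j ∧ α j = k ∧ α k = i)
    (hloop : σ.SameCycle i j ∧ σ.SameCycle i k)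
    (hα' : α' i = i ∧ α' j = j ∧ α' k = k ∧
      ∀ x, x ≠ i → x ≠ j → x ≠ k → α' x = α x) :
    kappa σ α' = kappa σ α := by
  obtain ⟨hαi, hαj, hαk⟩ := hcyc
  obtain ⟨hij, hik⟩ := hloop
  obtain ⟨hi, hj, hk, hα'_eq⟩ := hα'
  have hα'_cases : ∀ x, α' x = x ∨ α' x = α x := by
    intro x
    by_cases hx : x = i ∨ x = j ∨ x = k
    · rcases hx with rfl | rfl | rfl <;> simp [*]
    · push Not at hx
      exact .inr (hα'_eq x hx.1 hx.2.1 hx.2.2)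
  have hα_cases : ∀ x, α x = α' x ∨ σ.SameCycle x (α x) := by
    intro x
    by_cases hx : x = i ∨ x = j ∨ x = k
    · rcases hx with rfl | rfl | rfl
      · exact .inr (hαi ▸ hij)
      · exact .inr (hαj ▸ hij.symm.trans hik)
      · exact .inr (hαk ▸ hik.symm)
    · push Not at hx
      exact .inl (hα'_eq x hx.1 hx.2.1 hx.2.2).symm
  have hσ {τ : Equiv.Perm (Fin n)} : σ ∈ closure {σ, τ} := subset_closure (by simp)
  have hτ {τ : Equiv.Perm (Fin n)} : τ ∈ closure {σ, τ} := subset_closure (by simp)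
  apply kappa_eq_of_orbitRel_eq
  apply le_antisymm <;> apply orbitRel_closure_le <;> rintro s (rfl | rfl) x
  · exact Equiv.Perm.apply_mem_orbit_of_mem hσ x
  · rcases hα'_cases x with h | h <;> rw [Equiv.Perm.smul_def, h]
    exacts [mem_orbit_self x, Equiv.Perm.apply_mem_orbit_of_mem hτ x]
  · exact Equiv.Perm.apply_mem_orbit_of_mem hσ x
  · rcases hα_cases x with h | h
    · rw [Equiv.Perm.smul_def, h]
      exact Equiv.Perm.apply_mem_orbit_of_mem hτ x
    · exact h.mem_orbit_of_mem hσ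

/-- If `(i,j,k)` is a 3-cycle of `α` whose three points all lie in
the same cycle of `σ` (a double loop), then replacing `(i,j,k)` by fixed points
(passing to `α' = α·(i,k,j)`) does not change the number of orbits:
`κ(σ, α') = κ(σ, α)`. -/
theorem kappa_eq_of_double_loop {n : ℕ} (σ α α' : Equiv.Perm (Fin n))
    (i j k : Fin n) (hij : i ≠ j) (hik : i ≠ k) (hjk : j ≠ k)
    (hcyc : α i = j ∧ α j = k ∧ α k = i)
    (hloop : σ.SameCycle i j ∧ σ.SameCycle i k)
    (hα' : α' i = i ∧ α' j = j ∧ α' k = k ∧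
      ∀ x, x ≠ i → x ≠ j → x ≠ k → α' x = α x) :
    kappa σ α' = kappa σ α :=
  kappa_eq_of_double_loop_general σ α α' i j k hcyc hloop hα'
end

section
/- Let σ and α be permutations of {1, ..., n} and let (i,j,k) be a 3-cycle of α. If κ(σ, α·(i,k,j)) = κ(σ, α) + 2, then i, j, and k lie in three distinct cycles of σ. -/
namespace Setoid

variable {X : Type*}

def glue (r : Setoid X) (T : Set X) : Setoid X where
  r x y := r x y ∨ (∃ t ∈ T, r x t) ∧ ∃ t ∈ T, r y t
  iseqv.refl x := Or.inl (r.refl x)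
  iseqv.symm h := h.imp r.symm And.symm
  iseqv.trans := by
    rintro x y z (hxy | ⟨hx, ⟨t, ht, hyt⟩⟩) (hyz | ⟨⟨s, hs, hys⟩, hz⟩)
    · exact Or.inl (r.trans hxy hyz)
    · exact Or.inr ⟨⟨s, hs, r.trans hxy hys⟩, hz⟩
    · exact Or.inr ⟨hx, t, ht, r.trans (r.symm hyz) hyt⟩
    · exact Or.inr ⟨hx, hz⟩

theorem card_quotient_le_of_le [Finite X] {r s : Setoid X} (h : r ≤ s) :
    Nat.card (Quotient s) ≤ Nat.card (Quotient r) :=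
  Nat.card_le_card_of_surjective (Quotient.map' id h) (Quotient.ind fun x => ⟨⟦x⟧, rfl⟩)

theorem card_quotient_le_card_glue_add_one [Finite X] {r : Setoid X} {T : Set X} {a c : X}
    (hT : ∀ t ∈ T, r t a ∨ r t c) :
    Nat.card (Quotient r) ≤ Nat.card (Quotient (r.glue T)) + 1 := by
  classical
  have rel_a {x} (hx : ∃ t ∈ T, r x t) (hxc : ¬ r x c) : r x a := by
    obtain ⟨t, ht, hxt⟩ := hx
    exact (hT t ht).elim (r.trans hxt) fun htc => absurd (r.trans hxt htc) hxc
  let f (x : X) : Option (Quotient (r.glue T)) := if r x c then none else some ⟦x⟧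
  have hf : ∀ x y, r x y → f x = f y := by
    intro x y hxy
    have hc : r x c ↔ r y c := ⟨r.trans (r.symm hxy), r.trans hxy⟩
    by_cases hxc : r x c
    · simp only [f, if_pos hxc, if_pos (hc.1 hxc)]
    · simp only [f, if_neg hxc, if_neg (mt hc.2 hxc)]
      exact congrArg some (Quotient.sound (Or.inl hxy))
  have hinj : Function.Injective (Quotient.lift f hf) := by
    refine Quotient.ind₂ fun x y hxy => Quotient.sound ?_
    change f x = f y at hxy
    by_cases hxc : r x c <;> by_cases hyc : r y c <;> simp only [f, hxc, hyc, if_true, if_false,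
      reduceCtorEq, Option.some.injEq, Quotient.eq] at hxy
    · exact r.trans hxc (r.symm hyc)
    · rcases hxy with hxy | ⟨hx, hy⟩
      · exact hxy
      · exact r.trans (rel_a hx hxc) (r.symm (rel_a hy hyc))
  calc Nat.card (Quotient r) ≤ Nat.card (Option (Quotient (r.glue T))) :=
        Nat.card_le_card_of_injective _ hinj
    _ = _ := Finite.card_option

end Setoid

theorem MulAction.orbitRel_closure_le_s12 {G X : Type*} [Group G] [MulAction G X] {S : Set G}
    {r : Setoid X} (h : ∀ g ∈ S, ∀ x, r (g • x) x) :
    MulAction.orbitRel (Subgroup.closure S) X ≤ r := by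
  suffices key : ∀ g ∈ Subgroup.closure S, ∀ x, r (g • x) x by
    rintro - x ⟨⟨g, hg⟩, rfl⟩
    exact key g hg x
  intro g hg
  induction hg using Subgroup.closure_induction with
  | mem g hg => exact h g hg
  | one => simp
  | mul g g' _ _ ihg ihg' => exact fun x => (mul_smul g g' x).symm ▸ r.trans (ihg _) (ihg' x)
  | inv g _ ihg => exact fun x => by simpa using r.symm (ihg (g⁻¹ • x))

theorem Equiv.Perm.SameCycle.orbitRel {α : Type*} {σ : Equiv.Perm α}
    {H : Subgroup (Equiv.Perm α)} (hσ : σ ∈ H) {x y : α} (h : σ.SameCycle x y) :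
    MulAction.orbitRel H α x y := by
  obtain ⟨m, hm⟩ := h
  exact (MulAction.orbitRel H α).symm ⟨⟨σ ^ m, H.zpow_mem hσ m⟩, hm⟩

theorem double_bridge_is_regular_general {n : ℕ} (σ α α' : Equiv.Perm (Fin n))
    (i j k : Fin n)
    (hcyc : α i = j ∧ α j = k ∧ α k = i)
    (hα' : α' i = i ∧ α' j = j ∧ α' k = k ∧
      ∀ x, x ≠ i → x ≠ j → x ≠ k → α' x = α x)
    (hκ : kappa σ α' = kappa σ α + 2) :
    ¬ σ.SameCycle i j ∧ ¬ σ.SameCycle i k ∧ ¬ σ.SameCycle j k := by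
  set H := Subgroup.closure ({σ, α'} : Set (Equiv.Perm (Fin n)))
  set r := MulAction.orbitRel H (Fin n)
  have hσ : σ ∈ H := Subgroup.subset_closure (by simp)
  set K := Subgroup.closure ({σ, α} : Set (Equiv.Perm (Fin n)))
  have hle : MulAction.orbitRel K (Fin n) ≤ r.glue {i, j, k} := by
    refine MulAction.orbitRel_closure_le_s12 ?_
    rintro g (hg | hg) x <;> subst g
    · exact Or.inl ⟨⟨σ, hσ⟩, rfl⟩
    by_cases hx : x = i ∨ x = j ∨ x = k
    · refine Or.inr ⟨⟨α x, ?_, r.refl _⟩, x, hx, r.refl _⟩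
      rcases hx with rfl | rfl | rfl <;> simp [hcyc]
    · simp only [not_or] at hx
      left
      change r (α x) x
      rw [← hα'.2.2.2 x hx.1 hx.2.1 hx.2.2]
      exact ⟨⟨α', Subgroup.subset_closure (by simp)⟩, rfl⟩
  have not_covered_by_two_orbits (a c : Fin n)
      (hT : ∀ t ∈ ({i, j, k} : Set (Fin n)), r t a ∨ r t c) : False := by
    have := Setoid.card_quotient_le_card_glue_add_one hT
    have := Setoid.card_quotient_le_of_le hle
    change Nat.card (Quotient r) = Nat.card (Quotient (MulAction.orbitRel K (Fin n))) + 2 at hκ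
    omega
  have hr {x y} (h : σ.SameCycle x y) : r y x := r.symm (h.orbitRel hσ)
  refine ⟨fun h => not_covered_by_two_orbits i k ?_,
    fun h => not_covered_by_two_orbits i j ?_, fun h => not_covered_by_two_orbits i j ?_⟩ <;>
    rintro t (rfl | rfl | rfl) <;> simp [hr h]

/-- If `(i,j,k)` is a 3-cycle of `α` and replacing it by three
fixed points (passing to `α' = α·(i,k,j)`) increases the number of orbits by
exactly `2`, then `i`, `j`, `k` lie in three distinct cycles of `σ`. -/
theorem double_bridge_is_regular {n : ℕ} (σ α α' : Equiv.Perm (Fin n))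
    (i j k : Fin n) (hij : i ≠ j) (hik : i ≠ k) (hjk : j ≠ k)
    (hcyc : α i = j ∧ α j = k ∧ α k = i)
    (hα' : α' i = i ∧ α' j = j ∧ α' k = k ∧
      ∀ x, x ≠ i → x ≠ j → x ≠ k → α' x = α x)
    (hκ : kappa σ α' = kappa σ α + 2) :
    ¬ σ.SameCycle i j ∧ ¬ σ.SameCycle i k ∧ ¬ σ.SameCycle j k :=
  double_bridge_is_regular_general σ α α' i j k hcyc hα' hκ
end

section
/- For the formal power series identity over ℚ: 1/(1 - 8x + 4x²) · (1-2x)² - 4x²·((1-2x)/(1-8x+4x²))² / (1 + 4x²·(1/(1-8x+4x²))) = (1-2x)²/(1-8x+8x²). -/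
/-! Writing `D = 1 - 8x + 4x²`, `H = (1-2x)²/D`, `G = (1-2x)/D`, `F = 1/D`, one has
`H - 4x²G²/(1 + 4x²F) = (1-2x)²/D · (1 - 4x²/(D + 4x²)) = (1-2x)²/(D + 4x²)`,
and `D + 4x² = 1 - 8x + 8x²`. -/

open RatFunc in
lemma RatFunc.one_sub_mul_X_add_mul_X_sq_ne_zero {K : Type*} [Field K] (a b : K) :
    1 - algebraMap K (RatFunc K) a * X + algebraMap K (RatFunc K) b * X ^ 2 ≠ 0 := by
  have hp : 1 - Polynomial.C a * Polynomial.X + Polynomial.C b * Polynomial.X ^ 2 ≠ 0 :=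
    fun h => by simpa using congrArg (Polynomial.eval 0) h
  simpa [← RatFunc.algebraMap_X, ← RatFunc.algebraMap_C] using RatFunc.algebraMap_ne_zero hp

lemma one_div_mul_sq_sub_div_one_add_eq_sq_div_add {K : Type*} [Field K] {D c : K} (g : K)
    (hD : D ≠ 0) (hDc : D + c ≠ 0) :
    1 / D * g ^ 2 - c * (g / D) ^ 2 / (1 + c * (1 / D)) = g ^ 2 / (D + c) := by
  have hden : 1 + c * (1 / D) = (D + c) / D := by field_simp
  rw [hden]
  field_simp
  ring

/-- The rational function identity
`(1-2x)²/(1-8x+4x²) - 4x²·((1-2x)/(1-8x+4x²))² / (1 + 4x²·(1/(1-8x+4x²)))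
 = (1-2x)²/(1-8x+8x²)`,
i.e. `T(x) = H(x) - 4x²G(x)²/(1 + 4x²F(x))` with `F = 1/(1-8x+4x²)`,
`G = (1-2x)/(1-8x+4x²)`, `H = (1-2x)²/(1-8x+4x²)`. -/
theorem ladder_generating_function_identity :
    (1 / (1 - 8 * RatFunc.X + 4 * RatFunc.X ^ 2)) * (1 - 2 * RatFunc.X) ^ 2 -
      4 * RatFunc.X ^ 2 *
        ((1 - 2 * RatFunc.X) / (1 - 8 * RatFunc.X + 4 * RatFunc.X ^ 2)) ^ 2 /
        (1 + 4 * RatFunc.X ^ 2 * (1 / (1 - 8 * RatFunc.X + 4 * RatFunc.X ^ 2))) =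
      ((1 - 2 * RatFunc.X) ^ 2 / (1 - 8 * RatFunc.X + 8 * RatFunc.X ^ 2)
        : RatFunc ℚ) := by
  have hD : (1 - 8 * RatFunc.X + 4 * RatFunc.X ^ 2 : RatFunc ℚ) ≠ 0 := by
    simpa using RatFunc.one_sub_mul_X_add_mul_X_sq_ne_zero (8 : ℚ) 4
  have hsum : (1 - 8 * RatFunc.X + 4 * RatFunc.X ^ 2) + 4 * RatFunc.X ^ 2 =
      (1 - 8 * RatFunc.X + 8 * RatFunc.X ^ 2 : RatFunc ℚ) := by ring
  have hDc : (1 - 8 * RatFunc.X + 8 * RatFunc.X ^ 2 : RatFunc ℚ) ≠ 0 := by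
    simpa using RatFunc.one_sub_mul_X_add_mul_X_sq_ne_zero (8 : ℚ) 8
  rw [one_div_mul_sq_sub_div_one_add_eq_sq_div_add _ hD (hsum ▸ hDc), hsum]
end

section
/- For every k ≥ 2, the formal power series Σ_{m ≥ k+2} 2^{m+k} C(m+k-3, 2k-1) x^m equals 4x² · (4x/(1-2x)²)^k as elements of ℚ[[x]]. -/
/-! Rescaling `x ↦ 2x` in the negative binomial series `(1 - x)^{-(d+1)} = Σ C(d+n, d) xⁿ`
gives `(1 - 2x)^{-2k} = Σ 2ⁿ C(2k-1+n, 2k-1) xⁿ`; the right-hand side is therefore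
`4^{k+1} x^{k+2} (1 - 2x)^{-2k}`, and the two sides agree coefficientwise. -/

open PowerSeries

theorem PowerSeries.mk_pow_mul_add_choose_mul_one_sub_C_mul_X_pow_eq_one {R : Type*} [CommRing R]
    (a : R) (d : ℕ) :
    (mk fun n => a ^ n * (d + n).choose d : R⟦X⟧) * (1 - C a * X) ^ (d + 1) = 1 := by
  simpa only [map_mul, map_pow, map_sub, map_one, rescale_mk, rescale_X] using
    congrArg (rescale a) (mk_add_choose_mul_one_sub_pow_eq_one R d)

theorem PowerSeries.inv_one_sub_C_mul_X_pow_eq_mk {K : Type*} [Field K] (a : K) (d : ℕ) :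
    ((1 - C a * X) ^ (d + 1) : K⟦X⟧)⁻¹ = mk fun n => a ^ n * (d + n).choose d :=
  (inv_eq_iff_mul_eq_one (by simp)).2 (mk_pow_mul_add_choose_mul_one_sub_C_mul_X_pow_eq_one a d)

theorem PowerSeries.inv_pow {K : Type*} [Field K] {φ : K⟦X⟧} (hφ : constantCoeff φ ≠ 0) (n : ℕ) :
    (φ ^ n)⁻¹ = φ⁻¹ ^ n :=
  (inv_eq_iff_mul_eq_one (by simpa using pow_ne_zero n hφ)).2 <| by
    rw [← mul_pow, PowerSeries.inv_mul_cancel φ hφ, one_pow]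

/-- For every `k ≥ 2`, the formal power series
`Σ_{m ≥ k+2} 2^{m+k} C(m+k-3, 2k-1) x^m` equals `4x² · (4x/(1-2x)²)^k`
in `ℚ[[x]]`.  (The inverse of the unit `(1-2x)²` is taken in `ℚ[[x]]`.) -/
theorem pencil_series_identity (k : ℕ) (hk : 2 ≤ k) :
    (PowerSeries.mk fun m =>
        if k + 2 ≤ m then
          (2 : ℚ) ^ (m + k) * (Nat.choose (m + k - 3) (2 * k - 1) : ℚ)
        else 0) =
      4 * (PowerSeries.X : ℚ⟦X⟧) ^ 2 *
        (4 * PowerSeries.X * ((1 - 2 * PowerSeries.X) ^ 2)⁻¹) ^ k := by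
  have hpow : ((1 - 2 * X : ℚ⟦X⟧) ^ 2)⁻¹ ^ k = ((1 - C 2 * X) ^ (2 * k - 1 + 1))⁻¹ := by
    rw [← PowerSeries.inv_pow (by simp), ← pow_mul, map_ofNat, Nat.sub_add_cancel (by omega)]
  have hrhs : 4 * (X : ℚ⟦X⟧) ^ 2 * (4 * X * ((1 - 2 * X) ^ 2)⁻¹) ^ k =
      C (4 ^ (k + 1)) * X ^ (k + 2) * ((1 - C 2 * X) ^ (2 * k - 1 + 1))⁻¹ := by
    rw [mul_pow, hpow, map_pow, show C (4 : ℚ) = 4 from map_ofNat C 4]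
    ring
  rw [hrhs, inv_one_sub_C_mul_X_pow_eq_mk]
  ext m
  rw [mul_assoc, coeff_C_mul, coeff_X_pow_mul', coeff_mk]
  split_ifs with hm
  · rw [coeff_mk, show 2 * k - 1 + (m - (k + 2)) = m + k - 3 by omega, ← mul_assoc,
      show (4 : ℚ) = 2 ^ 2 by norm_num, ← pow_mul, ← pow_add]
    congr 2
    omega
  · rw [mul_zero]
end
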